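/- Let R be a Hecke symmetry on V⊗V with parameter q, and suppose R is not a scalar multiple of the identity. Then for any scalars g₁, g₂, g₃ ∈ ℂ, the identity (R₁₂ + g₁I)(R₂₃ + g₂I)(R₁₂ + g₃I) = (R₂₃ + g₃I)(R₁₂ + g₂I)(R₂₃ + g₁I) holds on V⊗V⊗V if and only if g₁g₃ = g₂(g₁ + g₃ + (q − q⁻¹)). (This is the scalar functional equation to which the quantum Yang–Baxter equation for R(u,v) = R + g(u,v)I reduces in the Hecke case.) -/
import Mathlib


/-- For an operator `X` on `V ⊗ V` (`V = ℂ^m`), the induced operator `X₁₂ = X ⊗ I`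
on `V ⊗ V ⊗ V`. -/
def amp12 {m : ℕ} (X : Matrix (Fin m × Fin m) (Fin m × Fin m) ℂ) :
    Matrix (Fin m × Fin m × Fin m) (Fin m × Fin m × Fin m) ℂ :=
  Matrix.of fun p q => X (p.1, p.2.1) (q.1, q.2.1) * (if p.2.2 = q.2.2 then 1 else 0)

/-- For an operator `X` on `V ⊗ V`, the induced operator `X₂₃ = I ⊗ X` on `V ⊗ V ⊗ V`. -/
def amp23 {m : ℕ} (X : Matrix (Fin m × Fin m) (Fin m × Fin m) ℂ) :
    Matrix (Fin m × Fin m × Fin m) (Fin m × Fin m × Fin m) ℂ :=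
  Matrix.of fun p q => (if p.1 = q.1 then 1 else 0) * X p.2 q.2

open Kronecker in
lemma amp12_eq {m : ℕ} (X : Matrix (Fin m × Fin m) (Fin m × Fin m) ℂ) :
    amp12 X = Matrix.reindexAlgEquiv ℂ ℂ (Equiv.prodAssoc (Fin m) (Fin m) (Fin m))
      (X ⊗ₖ (1 : Matrix (Fin m) (Fin m) ℂ)) := by
  ext ⟨a, b, c⟩ ⟨d, e, f⟩
  simp [amp12, Matrix.one_apply, Equiv.prodAssoc]

open Kronecker in
lemma amp23_eq {m : ℕ} (X : Matrix (Fin m × Fin m) (Fin m × Fin m) ℂ) :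
    amp23 X = (1 : Matrix (Fin m) (Fin m) ℂ) ⊗ₖ X := by
  ext ⟨a, b, c⟩ ⟨d, e, f⟩
  simp [amp23, Matrix.one_apply]

open Kronecker in
lemma amp12_mul {m : ℕ} (X Y : Matrix (Fin m × Fin m) (Fin m × Fin m) ℂ) :
    amp12 (X * Y) = amp12 X * amp12 Y := by
  rw [amp12_eq, amp12_eq, amp12_eq, ← map_mul, ← Matrix.mul_kronecker_mul, Matrix.one_mul]

open Kronecker in
lemma amp23_mul {m : ℕ} (X Y : Matrix (Fin m × Fin m) (Fin m × Fin m) ℂ) :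
    amp23 (X * Y) = amp23 X * amp23 Y := by
  rw [amp23_eq, amp23_eq, amp23_eq, ← Matrix.mul_kronecker_mul, Matrix.one_mul]

open Kronecker in
lemma amp12_one {m : ℕ} : amp12 (1 : Matrix (Fin m × Fin m) (Fin m × Fin m) ℂ) = 1 := by
  rw [amp12_eq]
  rw [Matrix.one_kronecker_one, map_one]

open Kronecker in
lemma amp23_one {m : ℕ} : amp23 (1 : Matrix (Fin m × Fin m) (Fin m × Fin m) ℂ) = 1 := by
  rw [amp23_eq, Matrix.one_kronecker_one]

lemma amp12_smul {m : ℕ} (c : ℂ) (X : Matrix (Fin m × Fin m) (Fin m × Fin m) ℂ) :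
    amp12 (c • X) = c • amp12 X := by
  ext ⟨a, b, c'⟩ ⟨d, e, f⟩
  simp [amp12, mul_assoc]

lemma amp23_smul {m : ℕ} (c : ℂ) (X : Matrix (Fin m × Fin m) (Fin m × Fin m) ℂ) :
    amp23 (c • X) = c • amp23 X := by
  ext ⟨a, b, c'⟩ ⟨d, e, f⟩
  simp only [amp23, Matrix.smul_apply, Matrix.of_apply, smul_eq_mul]
  ring

lemma amp12_add {m : ℕ} (X Y : Matrix (Fin m × Fin m) (Fin m × Fin m) ℂ) :
    amp12 (X + Y) = amp12 X + amp12 Y := by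
  ext ⟨a, b, c'⟩ ⟨d, e, f⟩
  by_cases hcf : c' = f <;> simp [amp12, hcf]

lemma amp23_add {m : ℕ} (X Y : Matrix (Fin m × Fin m) (Fin m × Fin m) ℂ) :
    amp23 (X + Y) = amp23 X + amp23 Y := by
  ext ⟨a, b, c'⟩ ⟨d, e, f⟩
  by_cases hcf : a = d <;> simp [amp23, hcf]

/-- If `X⊗I = I⊗X` then `X` is scalar. -/
lemma amp_eq_scalar {m : ℕ} (hm : 1 ≤ m) (X : Matrix (Fin m × Fin m) (Fin m × Fin m) ℂ)
    (h : amp12 X = amp23 X) :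
    X = (X (⟨0, hm⟩, ⟨0, hm⟩) (⟨0, hm⟩, ⟨0, hm⟩)) • 1 := by
  set i0 : Fin m := ⟨0, hm⟩ with hi0
  have key : ∀ a b c d e f : Fin m,
      X (a, b) (d, e) * (if c = f then (1:ℂ) else 0)
        = (if a = d then (1:ℂ) else 0) * X (b, c) (e, f) := by
    intro a b c d e f
    have := congrFun (congrFun h (a, b, c)) (d, e, f)
    simpa [amp12, amp23] using this
  have h1 : ∀ a b d e : Fin m, a ≠ d → X (a, b) (d, e) = 0 := by
    intro a b d e had
    have := key a b i0 d e i0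
    simpa [had] using this
  have h2 : ∀ b c e f : Fin m, c ≠ f → X (b, c) (e, f) = 0 := by
    intro b c e f hcf
    have := key i0 b c i0 e f
    simp [hcf] at this
    exact this.symm
  have h3 : ∀ a b : Fin m, X (a, b) (a, b) = X (b, i0) (b, i0) := by
    intro a b
    have := key a b i0 a b i0
    simpa using this
  have h4 : ∀ a b : Fin m, X (a, b) (a, b) = X (i0, i0) (i0, i0) := by
    intro a b
    rw [h3 a b, h3 b i0]
  ext ⟨x, y⟩ ⟨u, v⟩
  by_cases hxu : x = u
  · by_cases hyv : y = v
    · subst hxu; subst hyv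
      simp [Matrix.one_apply, h4 x y]
    · rw [h2 x y u v hyv]
      simp [Matrix.one_apply, hyv]
  · rw [h1 x y u v hxu]
    have hne : (x, y) ≠ (u, v) := by simp [hxu]
    simp [Matrix.one_apply, hne]

/-- For a Hecke symmetry `R` (parameter `q`) which is not a scalar multiple of the identity,
the identity `(R₁₂ + g₁I)(R₂₃ + g₂I)(R₁₂ + g₃I) = (R₂₃ + g₃I)(R₁₂ + g₂I)(R₂₃ + g₁I)` holds
iff `g₁g₃ = g₂(g₁ + g₃ + (q − q⁻¹))`. -/
theorem hecke_scalar_functional_equation (m : ℕ) (hm : 1 ≤ m)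
    (R : Matrix (Fin m × Fin m) (Fin m × Fin m) ℂ)
    (hbraid : amp12 R * amp23 R * amp12 R = amp23 R * amp12 R * amp23 R)
    (q : ℂ) (hq : q ≠ 0) (hq2 : q ^ 2 ≠ 1)
    (hHecke : (q • (1 : Matrix (Fin m × Fin m) (Fin m × Fin m) ℂ) - R) * (q⁻¹ • 1 + R) = 0)
    (hns : ∀ c : ℂ, R ≠ c • 1)
    (g₁ g₂ g₃ : ℂ) :
    (amp12 R + g₁ • 1) * (amp23 R + g₂ • 1) * (amp12 R + g₃ • 1) =
        (amp23 R + g₃ • 1) * (amp12 R + g₂ • 1) * (amp23 R + g₁ • 1) ↔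
      g₁ * g₃ = g₂ * (g₁ + g₃ + (q - q⁻¹)) := by
  have hsq : R * R = (q - q⁻¹) • R + 1 := by
    have expand : (q • (1 : Matrix (Fin m × Fin m) (Fin m × Fin m) ℂ) - R) * (q⁻¹ • 1 + R)
        = (q * q⁻¹) • (1 : Matrix (Fin m × Fin m) (Fin m × Fin m) ℂ)
          + ((q - q⁻¹) • R - R * R) := by
      simp only [sub_mul, mul_add, Matrix.smul_mul, Matrix.mul_smul, Matrix.one_mul,
        Matrix.mul_one, smul_smul, sub_smul]
      module
    rw [expand, mul_inv_cancel₀ hq] at hHecke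
    have h2 : ((q - q⁻¹) • R + 1) - R * R = 0 := by
      rw [← hHecke]; module
    exact (sub_eq_zero.mp h2).symm
  set A := amp12 R with hA
  set B := amp23 R with hB
  have hA2 : A * A = (q - q⁻¹) • A + 1 := by
    rw [hA, ← amp12_mul, hsq, amp12_add, amp12_smul, amp12_one]
  have hB2 : B * B = (q - q⁻¹) • B + 1 := by
    rw [hB, ← amp23_mul, hsq, amp23_add, amp23_smul, amp23_one]
  have key : (A + g₁ • 1) * (B + g₂ • 1) * (A + g₃ • 1)
      - (B + g₃ • 1) * (A + g₂ • 1) * (B + g₁ • 1)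
      = (g₂ * (g₁ + g₃ + (q - q⁻¹)) - g₁ * g₃) • (A - B) := by
    simp only [add_mul, mul_add, Matrix.smul_mul, Matrix.mul_smul, Matrix.one_mul,
      Matrix.mul_one, smul_smul, smul_add]
    rw [hbraid, hA2, hB2]
    module
  have hAB : A - B ≠ 0 := by
    intro h0
    have hABeq : amp12 R = amp23 R := sub_eq_zero.mp h0
    exact hns _ (amp_eq_scalar hm R hABeq)
  constructor
  · intro h
    have h0 : (g₂ * (g₁ + g₃ + (q - q⁻¹)) - g₁ * g₃) • (A - B) = 0 := by
      rw [← key, h, sub_self]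
    rcases smul_eq_zero.mp h0 with hc | hc
    · linear_combination -hc
    · exact absurd hc hAB
  · intro h
    have hc : g₂ * (g₁ + g₃ + (q - q⁻¹)) - g₁ * g₃ = 0 := by rw [← h]; ring
    rw [hc, zero_smul, sub_eq_zero] at key
    exact key
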